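/- arXiv:2403.16330 — 6 statements merged into one kernel-verified Lean document; each statement's English description precedes it below -/
import Mathlib

section
/- Suppose the convex hull of vectors b_1, ..., b_{n+1} in R^n contains the origin. Then for any vector b_0 in R^n there exists an index s in {1, ..., n+1} such that the convex hull of the set obtained by replacing b_s with b_0 still contains the origin. -/
open Finset

private lemma key_replacement (n : ℕ) (b : Fin (n + 1) → EuclideanSpace ℝ (Fin n))
    (b0 : EuclideanSpace ℝ (Fin n)) (l m : Fin (n + 1) → ℝ)
    (hl0 : ∀ i, 0 ≤ l i) (hl1 : ∑ i, l i = 1)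
    (hlb : ∑ i, l i • b i = 0)
    (hm : ∑ i, m i • b i = (∑ i, m i) • b0)
    (hms : 0 ≤ ∑ i, m i)
    (hpos : ∃ i, 0 < m i) :
    ∃ s : Fin (n + 1),
      (0 : EuclideanSpace ℝ (Fin n)) ∈ convexHull ℝ (Set.range (Function.update b s b0)) := by
  classical
  set S : Finset (Fin (n + 1)) := Finset.univ.filter (fun i => 0 < m i) with hS
  have hSne : S.Nonempty := by
    obtain ⟨i, hi⟩ := hpos
    exact ⟨i, by simp [hS, hi]⟩
  obtain ⟨s, hsS, hmin⟩ := S.exists_min_image (fun i => l i / m i) hSne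
  have hms' : 0 < m s := by simpa [hS] using hsS
  set ε : ℝ := l s / m s with hε
  have hε0 : 0 ≤ ε := div_nonneg (hl0 s) hms'.le
  have hεi : ∀ i, ε * m i ≤ l i := by
    intro i
    by_cases hi : 0 < m i
    · have := hmin i (by simp [hS, hi])
      calc ε * m i ≤ (l i / m i) * m i := by nlinarith
        _ = l i := div_mul_cancel₀ _ hi.ne'
    · push_neg at hi
      nlinarith [hl0 i, mul_nonpos_of_nonneg_of_nonpos hε0 hi]
  have hεs : ε * m s = l s := div_mul_cancel₀ _ hms'.ne'
  set M : ℝ := ∑ i, m i with hM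
  set w : Fin (n + 1) → ℝ := fun i => if i = s then ε * M else l i - ε * m i with hw
  refine ⟨s, ?_⟩
  have hw0 : ∀ i, 0 ≤ w i := by
    intro i
    by_cases hi : i = s
    · simp [hw, hi, mul_nonneg hε0 hms]
    · simp only [hw, hi, if_neg hi]
      linarith [hεi i]
  have hws : w s = ε * M := by simp [hw]
  have herase : ∀ i ∈ Finset.univ.erase s, w i = l i - ε * m i := by
    intro i hi
    simp [hw, (Finset.mem_erase.mp hi).1]
  have hsum_le : ∑ i ∈ Finset.univ.erase s, (l i - ε * m i) = 1 - ε * M := by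
    rw [Finset.sum_erase (f := fun i => l i - ε * m i) Finset.univ
      (show l s - ε * m s = 0 by linarith)]
    rw [Finset.sum_sub_distrib, hl1, ← Finset.mul_sum]
  have hw1 : ∑ i, w i = 1 := by
    rw [← Finset.sum_erase_add Finset.univ w (Finset.mem_univ s), hws,
      Finset.sum_congr rfl herase, hsum_le]
    ring
  have hcomb : ∑ i, w i • Function.update b s b0 i = 0 := by
    have hsplit := Finset.sum_erase_add Finset.univ
      (fun i => w i • Function.update b s b0 i) (Finset.mem_univ s)
    rw [← hsplit]
    have h1 : ∑ i ∈ Finset.univ.erase s, w i • Function.update b s b0 i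
        = ∑ i ∈ Finset.univ.erase s, (l i - ε * m i) • b i := by
      refine Finset.sum_congr rfl fun i hi => ?_
      rw [herase i hi, Function.update_of_ne (Finset.mem_erase.mp hi).1]
    have h2 : ∑ i ∈ Finset.univ.erase s, (l i - ε * m i) • b i
        = ∑ i, (l i - ε * m i) • b i := by
      exact Finset.sum_erase (f := fun i => (l i - ε * m i) • b i) Finset.univ
        (by simp [show l s - ε * m s = 0 by linarith])
    have h3 : ∑ i, (l i - ε * m i) • b i = - (ε * M) • b0 := by
      simp only [sub_smul, Finset.sum_sub_distrib, hlb, mul_smul, ← Finset.smul_sum, hm]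
      simp [smul_smul, hM]
    rw [h1, h2, h3]
    simp only [Function.update_self, hws, neg_smul]
    exact neg_add_cancel _
  exact mem_convexHull_of_exists_fintype w (Function.update b s b0) hw0 hw1
    (fun i => Set.mem_range_self i) hcomb

theorem replacement_exists (n : ℕ) (b : Fin (n + 1) → EuclideanSpace ℝ (Fin n))
    (h : (0 : EuclideanSpace ℝ (Fin n)) ∈ convexHull ℝ (Set.range b))
    (b0 : EuclideanSpace ℝ (Fin n)) :
    ∃ s : Fin (n + 1),
      (0 : EuclideanSpace ℝ (Fin n)) ∈ convexHull ℝ (Set.range (Function.update b s b0)) := by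
  classical
  -- extract convex weights l
  rw [convexHull_range_eq_exists_affineCombination] at h
  obtain ⟨t, wt, hwt0, hwt1, hwtc⟩ := h
  set l : Fin (n + 1) → ℝ := fun i => if i ∈ t then wt i else 0 with hl
  have hl0 : ∀ i, 0 ≤ l i := by
    intro i; by_cases hi : i ∈ t <;> simp [hl, hi, hwt0 i]
  have hl1 : ∑ i, l i = 1 := by
    rw [Finset.sum_ite_mem, Finset.univ_inter, hwt1]
  have hlb : ∑ i, l i • b i = 0 := by
    have := affineCombination_eq_linear_combination t b wt hwt1
    rw [this] at hwtc
    rw [← hwtc]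
    rw [← Finset.sum_subset (Finset.subset_univ t)
      (fun i _ hi => by simp [hl, hi] : ∀ i ∈ Finset.univ, i ∉ t → l i • b i = 0)]
    exact Finset.sum_congr rfl fun i hi => by simp [hl, hi]
  by_cases hind : AffineIndependent ℝ b
  · have htop : affineSpan ℝ (Set.range b) = ⊤ := by
      rw [hind.affineSpan_eq_top_iff_card_eq_finrank_add_one]
      simp [finrank_euclideanSpace_fin]
    have hb0 : b0 ∈ affineSpan ℝ (Set.range b) := htop ▸ AffineSubspace.mem_top ℝ _ b0
    obtain ⟨m, hm1, hmc⟩ := eq_affineCombination_of_mem_affineSpan_of_fintype hb0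
    have hmb : ∑ i, m i • b i = (∑ i, m i) • b0 := by
      rw [hm1, one_smul, ← affineCombination_eq_linear_combination Finset.univ b m hm1, ← hmc]
    refine key_replacement n b b0 l m hl0 hl1 hlb hmb (by rw [hm1]; norm_num) ?_
    by_contra hc
    push_neg at hc
    have : ∑ i, m i ≤ 0 := Finset.sum_nonpos fun i _ => hc i
    rw [hm1] at this; linarith
  · rw [affineIndependent_iff] at hind
    push_neg at hind
    obtain ⟨t', w', hs0, hc0, e, het, hne⟩ := hind
    set m : Fin (n + 1) → ℝ := fun i => if i ∈ t' then w' i else 0 with hmdef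
    have hmsum : ∑ i, m i = 0 := by
      rw [Finset.sum_ite_mem, Finset.univ_inter, hs0]
    have hmb : ∑ i, m i • b i = (∑ i, m i) • b0 := by
      rw [hmsum, zero_smul]
      rw [← hc0, ← Finset.sum_subset (Finset.subset_univ t')
        (fun i _ hi => by simp [hmdef, hi] : ∀ i ∈ Finset.univ, i ∉ t' → m i • b i = 0)]
      exact Finset.sum_congr rfl fun i hi => by simp [hmdef, hi]
    refine key_replacement n b b0 l m hl0 hl1 hlb hmb (by rw [hmsum]) ?_
    by_contra hc
    push_neg at hc
    have hall : ∀ i ∈ Finset.univ, m i = 0 :=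
      (Finset.sum_eq_zero_iff_of_nonpos (fun i _ => hc i)).mp hmsum
    have : m e = 0 := hall e (Finset.mem_univ e)
    simp [hmdef, het] at this
    exact hne this
end

section
/- Suppose the convex hull of vectors b_1, ..., b_{n+1} in R^n contains the origin, and the enlarged system {b_0, b_1, ..., b_{n+1}} is nondegenerate, meaning every n of its vectors are linearly independent. Then there exists a unique index s in {1, ..., n+1} such that the convex hull of the vectors obtained by replacing b_s with b_0 contains the origin. -/
/-- A finite system of vectors in `ℝ^n` is nondegenerate if every `n` of its vectors
are linearly independent. -/
def Nondegenerate {m n : ℕ} (c : Fin m → EuclideanSpace ℝ (Fin n)) : Prop :=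
  ∀ S : Finset (Fin m), S.card = n → LinearIndependent ℝ (fun i : S => c i)

/-!
Write `0 = ∑ lᵢ bᵢ` with convex weights `l`. Since any `n` of the `bᵢ` are independent, the
linear relations among `b₁, …, bₙ₊₁` are exactly the multiples of `l`; hence all `lᵢ > 0`, and
the representations of `b₀` are `∑ (cᵢ - t lᵢ) bᵢ` for a fixed `c` and arbitrary real `t`.
The origin lies in the convex hull after replacing `bₛ` by `b₀` iff `b₀` has a representation
with coefficient `0` at `s` and all other coefficients `≤ 0`, i.e. iff `cₛ / lₛ` is the largest
of the ratios `cᵢ / lᵢ`. A largest ratio exists, and a tie between two indices would write `b₀`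
in terms of the other `n - 1` vectors `bᵢ`, contradicting nondegeneracy.
-/

open Function Submodule

section Semiring
variable {R M ι : Type*} [Semiring R] [AddCommMonoid M] [Module R M] [Fintype ι]

theorem sum_smul_mem_span_image {b : ι → M} {S : Set ι} {d : ι → R} (hd : ∀ i ∉ S, d i = 0) :
    ∑ i, d i • b i ∈ span R (b '' S) := by
  refine sum_mem fun i _ => ?_
  by_cases hi : i ∈ S
  · exact smul_mem _ _ (subset_span (Set.mem_image_of_mem b hi))
  · rw [hd i hi, zero_smul]
    exact zero_mem _

theorem sum_smul_update [DecidableEq ι] (w : ι → R) (v : ι → M) (s : ι) (x : M) :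
    ∑ i, w i • update v s x i = w s • x + ∑ i, update w s 0 i • v i := by
  rw [Fintype.sum_eq_add_sum_compl s,
    Fintype.sum_eq_add_sum_compl s (fun i => update w s 0 i • v i)]
  simp only [update_self, zero_smul, zero_add]
  congr 1
  refine Finset.sum_congr rfl fun i hi => ?_
  rw [update_of_ne (by simpa using hi), update_of_ne (by simpa using hi)]

end Semiring

theorem eq_zero_of_sum_smul_eq_zero_of_apply_eq_zero {R M ι : Type*} [Ring R] [AddCommGroup M]
    [Module R M] [Fintype ι] {b : ι → M} {s : ι} (hb : LinearIndepOn R b {s}ᶜ) {ρ : ι → R}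
    (hρ : ∑ i, ρ i • b i = 0) (hρs : ρ s = 0) : ρ = 0 := by
  classical
  rw [← Finset.coe_singleton, ← Finset.coe_compl, linearIndepOn_finset_iff] at hb
  funext i
  by_cases hi : i = s
  · rw [hi, hρs, Pi.zero_apply]
  · refine hb ρ ?_ i (by simpa using hi)
    rwa [Fintype.sum_eq_add_sum_compl s, hρs, zero_smul, zero_add] at hρ

theorem pos_of_sum_smul_eq_zero {R M ι : Type*} [Ring R] [PartialOrder R] [AddCommGroup M]
    [Module R M] [Fintype ι] {b : ι → M} (hb : ∀ s, LinearIndepOn R b {s}ᶜ) {l : ι → R}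
    (hl0 : 0 ≤ l) (hl : l ≠ 0) (hlb : ∑ i, l i • b i = 0) (i : ι) : 0 < l i :=
  (hl0 i).lt_of_ne fun h => hl (eq_zero_of_sum_smul_eq_zero_of_apply_eq_zero (hb i) hlb h.symm)

section Field
variable {𝕜 E ι : Type*} [Field 𝕜] [AddCommGroup E] [Module 𝕜 E] [Fintype ι] {b : ι → E}

theorem eq_smul_of_sum_smul_eq_zero {s : ι} (hb : LinearIndepOn 𝕜 b {s}ᶜ) {l ν : ι → 𝕜}
    (hlb : ∑ i, l i • b i = 0) (hls : l s ≠ 0) (hν : ∑ i, ν i • b i = 0) :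
    ν = (ν s / l s) • l := by
  rw [← sub_eq_zero]
  refine eq_zero_of_sum_smul_eq_zero_of_apply_eq_zero hb ?_ ?_
  · simp only [Pi.sub_apply, Pi.smul_apply, smul_eq_mul, sub_smul, mul_smul,
      Finset.sum_sub_distrib, ← Finset.smul_sum, hν, hlb, smul_zero, sub_zero]
  · simp [div_mul_cancel₀ _ hls]

variable [LinearOrder 𝕜] [IsStrictOrderedRing 𝕜]

theorem zero_mem_convexHull_range_iff (v : ι → E) :
    (0 : E) ∈ convexHull 𝕜 (Set.range v) ↔
      ∃ w : ι → 𝕜, 0 ≤ w ∧ w ≠ 0 ∧ ∑ i, w i • v i = 0 := by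
  classical
  constructor
  · rw [convexHull_range_eq_exists_affineCombination]
    rintro ⟨u, w, hw0, hw1, hu⟩
    have hw1' : ∑ i, (u : Set ι).indicator w i = 1 := by
      simpa [Finset.sum_indicator_subset _ u.subset_univ] using hw1
    refine ⟨(u : Set ι).indicator w, fun i => Set.indicator_nonneg hw0 i, ?_, ?_⟩
    · rintro h
      simp [h] at hw1'
    · rwa [Finset.affineCombination_indicator_subset _ _ u.subset_univ,
        Finset.affineCombination_eq_linear_combination _ _ _ hw1'] at hu
  · rintro ⟨w, hw0, hw, hwv⟩
    obtain ⟨j, hj⟩ := Function.ne_iff.1 hw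
    have hpos : 0 < ∑ i, w i :=
      Finset.sum_pos' (fun i _ => hw0 i) ⟨j, Finset.mem_univ j, (hw0 j).lt_of_ne' hj⟩
    have := Finset.univ.centerMass_mem_convexHull (fun i _ => hw0 i) hpos
      (fun i _ => Set.mem_range_self (f := v) i)
    rwa [Finset.centerMass, hwv, smul_zero] at this

variable [DecidableEq ι]

theorem zero_mem_convexHull_update_iff (hb : ∀ s, LinearIndepOn 𝕜 b {s}ᶜ) {l c : ι → 𝕜}
    (hl : ∀ i, 0 < l i) (hlb : ∑ i, l i • b i = 0) {x : E} (hc : ∑ i, c i • b i = x) (s : ι) :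
    (0 : E) ∈ convexHull 𝕜 (Set.range (update b s x)) ↔ ∀ i, c i / l i ≤ c s / l s := by
  rw [zero_mem_convexHull_range_iff]
  constructor
  · rintro ⟨w, hw0, hw, hwb⟩
    replace hw0 : ∀ i, 0 ≤ w i := hw0
    rw [sum_smul_update] at hwb
    have hws : 0 < w s := by
      refine (hw0 s).lt_of_ne' fun hs => hw ?_
      rw [hs, zero_smul, zero_add] at hwb
      have := eq_zero_of_sum_smul_eq_zero_of_apply_eq_zero (hb s) hwb (update_self ..)
      rwa [update_eq_self_iff.2 hs.symm] at this
    have hν : ∑ i, (w s • c + update w s 0) i • b i = 0 := by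
      simpa only [Pi.add_apply, Pi.smul_apply, smul_eq_mul, add_smul, mul_smul,
        Finset.sum_add_distrib, ← Finset.smul_sum, hc] using hwb
    have hνl := eq_smul_of_sum_smul_eq_zero (hb s) hlb (hl s).ne' hν
    intro i
    have hi := congr_fun hνl i
    simp only [Pi.add_apply, Pi.smul_apply, smul_eq_mul, update_self, add_zero] at hi
    have hwi : 0 ≤ update w s 0 i := by
      rcases eq_or_ne i s with rfl | h
      · simp
      · simpa [update_of_ne h] using hw0 i
    rw [div_le_iff₀ (hl i)]
    refine le_of_mul_le_mul_left ?_ hws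
    calc w s * c i ≤ w s * c i + update w s 0 i := le_add_of_nonneg_right hwi
      _ = w s * (c s / l s * l i) := by rw [hi]; ring
  · intro hr
    set q := (c s / l s) • l - c with hq
    have hqs : q s = 0 := by simp [hq, div_mul_cancel₀ _ (hl s).ne']
    have hqb : ∑ i, q i • b i = -x := by
      simp [hq, sub_smul, mul_smul, Finset.sum_sub_distrib, ← Finset.smul_sum, hlb, hc]
    refine ⟨update q s 1, fun i => ?_, fun h => by simpa using congr_fun h s, ?_⟩
    · rcases eq_or_ne i s with rfl | hi
      · simp
      · rw [update_of_ne hi]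
        simpa [hq, sub_nonneg, ← div_le_iff₀ (hl i)] using hr i
    · rw [sum_smul_update, update_self, update_idem, update_eq_self_iff.2 hqs.symm, hqb,
        one_smul, add_neg_cancel]

theorem existsUnique_zero_mem_convexHull_update [Nonempty ι] (hb : ∀ s, LinearIndepOn 𝕜 b {s}ᶜ)
    {x : E} (hx : x ∈ span 𝕜 (Set.range b))
    (hxb : ∀ s i, s ≠ i → x ∉ span 𝕜 (b '' {s, i}ᶜ))
    (h0 : (0 : E) ∈ convexHull 𝕜 (Set.range b)) :
    ∃! s, (0 : E) ∈ convexHull 𝕜 (Set.range (update b s x)) := by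
  obtain ⟨l, hl0, hl, hlb⟩ := (zero_mem_convexHull_range_iff b).1 h0
  have hlpos := pos_of_sum_smul_eq_zero hb hl0 hl hlb
  obtain ⟨c, hc⟩ := (mem_span_range_iff_exists_fun 𝕜).1 hx
  simp only [zero_mem_convexHull_update_iff hb hlpos hlb hc]
  obtain ⟨s, hs⟩ := Finite.exists_max fun i => c i / l i
  refine ⟨s, hs, fun i hi => by_contra fun hne => hxb i s hne ?_⟩
  have hsi : c s / l s = c i / l i := le_antisymm (hi s) (hs i)
  have hxd : ∑ j, (c - (c s / l s) • l) j • b j = x := by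
    simp [sub_smul, mul_smul, Finset.sum_sub_distrib, ← Finset.smul_sum, hlb, hc]
  rw [← hxd]
  refine sum_smul_mem_span_image fun j hj => ?_
  obtain rfl | rfl : j = i ∨ j = s := by simpa [or_iff_not_imp_left] using hj
  · simp [hsi, div_mul_cancel₀ _ (hlpos j).ne']
  · simp [div_mul_cancel₀ _ (hlpos j).ne']

end Field

theorem Nondegenerate.linearIndepOn {m n : ℕ} {c : Fin m → EuclideanSpace ℝ (Fin n)}
    (h : Nondegenerate c) {S : Set (Fin m)} (hS : S.ncard = n) : LinearIndepOn ℝ c S := by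
  have : LinearIndepOn ℝ c S.toFinite.toFinset :=
    h _ (by rwa [← Set.ncard_eq_toFinset_card])
  rwa [Set.Finite.coe_toFinset] at this

section
variable {n : ℕ} {b : Fin (n + 1) → EuclideanSpace ℝ (Fin n)} {x : EuclideanSpace ℝ (Fin n)}

theorem Nondegenerate.linearIndepOn_compl_singleton
    (h : Nondegenerate (Fin.cons x b : Fin (n + 2) → EuclideanSpace ℝ (Fin n))) (s : Fin (n + 1)) :
    LinearIndepOn ℝ b {s}ᶜ := by
  have hS := h.linearIndepOn (S := Fin.succ '' {s}ᶜ) (by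
    rw [Set.ncard_image_of_injective _ (Fin.succ_injective _), Set.ncard_compl]; simp)
  simpa [Fin.cons_comp_succ] using hS.comp_of_image (Fin.succ_injective _).injOn

theorem Nondegenerate.notMem_span_image_compl_pair
    (h : Nondegenerate (Fin.cons x b : Fin (n + 2) → EuclideanSpace ℝ (Fin n)))
    {s i : Fin (n + 1)} (hsi : s ≠ i) : x ∉ span ℝ (b '' {s, i}ᶜ) := by
  have hn : n ≠ 0 := by rintro rfl; exact hsi (Subsingleton.elim (α := Fin 1) s i)
  have h0 : (0 : Fin (n + 2)) ∉ Fin.succ '' {s, i}ᶜ := by simp [Fin.succ_ne_zero]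
  have hS := h.linearIndepOn (S := insert 0 (Fin.succ '' {s, i}ᶜ)) (by
    rw [Set.ncard_insert_of_notMem h0, Set.ncard_image_of_injective _ (Fin.succ_injective _),
      Set.ncard_compl, Set.ncard_pair hsi, Nat.card_eq_fintype_card, Fintype.card_fin]
    omega)
  rw [linearIndepOn_insert h0] at hS
  simpa [Set.image_image] using hS.2

theorem Nondegenerate.mem_span_range
    (h : Nondegenerate (Fin.cons x b : Fin (n + 2) → EuclideanSpace ℝ (Fin n))) :
    x ∈ span ℝ (Set.range b) := by
  have htop := (h.linearIndepOn_compl_singleton 0).linearIndependent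
    |>.span_eq_top_of_card_eq_finrank' (by rw [Fintype.card_compl_set]; simp)
  exact span_mono (Set.range_comp_subset_range _ _) (htop ▸ mem_top)

end

theorem replacement_unique (n : ℕ) (b : Fin (n + 1) → EuclideanSpace ℝ (Fin n))
    (b0 : EuclideanSpace ℝ (Fin n))
    (h : (0 : EuclideanSpace ℝ (Fin n)) ∈ convexHull ℝ (Set.range b))
    (hnd : Nondegenerate (Fin.cons b0 b : Fin (n + 2) → EuclideanSpace ℝ (Fin n))) :
    ∃! s : Fin (n + 1),
      (0 : EuclideanSpace ℝ (Fin n)) ∈ convexHull ℝ (Set.range (Function.update b s b0)) :=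
  existsUnique_zero_mem_convexHull_update hnd.linearIndepOn_compl_singleton hnd.mem_span_range
    (fun _ _ => hnd.notMem_span_image_compl_pair) h
end

section
/- (Sufficiency in the alternance criterion.) Let K be a compact metric space, phi_1, ..., phi_n continuous real functions on K, P their span, and f in C(K). Suppose p in P admits points tau_1, ..., tau_m in K (m <= n+1) and signs sigma_i in {-1,1} with p(tau_i) - f(tau_i) = sigma_i * ||p - f|| for all i, such that the origin lies in the convex hull of {sigma_i * u(tau_i)}, where u(t) = (phi_1(t), ..., phi_n(t)). Then for every q in P, ||q - f||_{C(K)} >= ||p - f||_{C(K)}. -/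
theorem alternance_sufficiency
    (K : Type*) [MetricSpace K] [CompactSpace K] (n : ℕ)
    (φ : Fin n → C(K, ℝ)) (f : C(K, ℝ)) (p : C(K, ℝ))
    (hp : p ∈ Submodule.span ℝ (Set.range φ))
    (m : ℕ) (hm : m ≤ n + 1) (τ : Fin m → K) (σ : Fin m → ℝ)
    (hσ : ∀ i, σ i = 1 ∨ σ i = -1)
    (halt : ∀ i, p (τ i) - f (τ i) = σ i * ‖p - f‖)
    (hhull : (0 : Fin n → ℝ) ∈
      convexHull ℝ (Set.range fun i => σ i • (fun k : Fin n => φ k (τ i)))) :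
    ∀ q ∈ Submodule.span ℝ (Set.range φ), ‖p - f‖ ≤ ‖q - f‖ := by
  intro q hq
  rw [convexHull_range_eq_exists_affineCombination] at hhull
  obtain ⟨s, w, hw0, hw1, hcomb⟩ := hhull
  rw [Finset.affineCombination_eq_linear_combination _ _ _ hw1] at hcomb
  -- coordinatewise: for each k, ∑ i in s, w i * (σ i * φ k (τ i)) = 0
  have hcoord : ∀ k : Fin n, ∑ i ∈ s, w i * (σ i * φ k (τ i)) = 0 := by
    intro k
    have := congrFun hcomb k
    simpa [Finset.sum_apply, mul_comm] using this
  -- the functional vanishes on the span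
  have hzero : ∀ g ∈ Submodule.span ℝ (Set.range φ),
      ∑ i ∈ s, w i * (σ i * g (τ i)) = 0 := by
    intro g hg
    induction hg using Submodule.span_induction with
    | mem x hx =>
      obtain ⟨k, rfl⟩ := hx
      exact hcoord k
    | zero => simp
    | add x y hx hy ihx ihy =>
      simp only [ContinuousMap.add_apply, mul_add, Finset.sum_add_distrib]
      rw [ihx, ihy]; ring
    | smul c x hx ihx =>
      simp only [ContinuousMap.smul_apply, smul_eq_mul]
      have : ∀ i ∈ s, w i * (σ i * (c * x (τ i))) = c * (w i * (σ i * x (τ i))) := by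
        intro i _; ring
      rw [Finset.sum_congr rfl this, ← Finset.mul_sum, ihx, mul_zero]
  have hσsq : ∀ i, σ i * σ i = 1 := by
    intro i; rcases hσ i with h | h <;> rw [h] <;> norm_num
  -- ∑ w i * (σ i * (p - f)(τ i)) = ‖p - f‖
  have h1 : ∑ i ∈ s, w i * (σ i * ((p - f) (τ i))) = ‖p - f‖ := by
    have : ∀ i ∈ s, w i * (σ i * ((p - f) (τ i))) = w i * ‖p - f‖ := by
      intro i _
      rw [ContinuousMap.sub_apply, halt i]
      linear_combination (w i * ‖p - f‖) * hσsq i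
    rw [Finset.sum_congr rfl this, ← Finset.sum_mul, hw1, one_mul]
  have hpq : ∑ i ∈ s, w i * (σ i * ((p - q) (τ i))) = 0 :=
    hzero (p - q) (Submodule.sub_mem _ hp hq)
  have hsplit : ∑ i ∈ s, w i * (σ i * ((p - f) (τ i)))
      = ∑ i ∈ s, w i * (σ i * ((p - q) (τ i)))
        + ∑ i ∈ s, w i * (σ i * ((q - f) (τ i))) := by
    rw [← Finset.sum_add_distrib]
    apply Finset.sum_congr rfl
    intro i _
    simp only [ContinuousMap.sub_apply]
    ring
  have hbound : ∑ i ∈ s, w i * (σ i * ((q - f) (τ i))) ≤ ‖q - f‖ := by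
    calc ∑ i ∈ s, w i * (σ i * ((q - f) (τ i)))
        ≤ ∑ i ∈ s, w i * ‖q - f‖ := by
          apply Finset.sum_le_sum
          intro i hi
          apply mul_le_mul_of_nonneg_left _ (hw0 i hi)
          calc σ i * ((q - f) (τ i)) ≤ |σ i * ((q - f) (τ i))| := le_abs_self _
            _ = |(q - f) (τ i)| := by
                rcases hσ i with h | h <;> rw [h, abs_mul] <;> simp
            _ ≤ ‖q - f‖ := by
                rw [← Real.norm_eq_abs]
                exact ContinuousMap.norm_coe_le_norm _ _
      _ = ‖q - f‖ := by rw [← Finset.sum_mul, hw1, one_mul]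
  linarith [h1, hpq, hsplit, hbound]
end

section
/- In the k-th iteration of the generalized Remez algorithm the following identity holds: alpha_0 * r_k - b_{k+1} + (1 - alpha_0) * b_k = 0, where b_k = |p_k(t_i) - f(t_i)| is the common leveled deviation at the current nodes, r_k = ||p_k - f||, b_{k+1} is the leveled deviation at the updated nodes, and alpha_0 is the barycentric coefficient of the new vector a_0 in the representation of the origin as a convex combination of the updated oriented moment vectors. Consequently, B_{k+1} - b_{k+1} <= (1 - alpha_0)(B_k - b_k), where B_{k+1} = min{B_k, r_k}. -/
/-!
Pair `p_{k+1} - p_k` with every oriented moment vector `a_i` and average with the weights `α_i`: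
the result vanishes because `∑ α_i a_i = 0`, while the leveling conditions make it
`b_{k+1} - b_k + α_0 (b_k - r_k)`. The estimate then follows from
`min B_k r_k ≤ α_0 r_k + (1 - α_0) B_k`.
-/

open Matrix

theorem sum_mul_dotProduct_eq_zero {ι m R : Type*} [Fintype ι] [Fintype m] [CommSemiring R]
    {a : ι → m → R} {α : ι → R} (hzero : ∑ i, α i • a i = 0) (p : m → R) :
    ∑ i, α i * (p ⬝ᵥ a i) = 0 := by
  simp_rw [← smul_eq_mul, ← dotProduct_smul, ← dotProduct_sum, hzero, dotProduct_zero]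

theorem leveled_deviation_identity {ι m R : Type*} [Fintype ι] [DecidableEq ι] [Fintype m]
    [CommRing R] {a : ι → m → R} {α : ι → R} (hαsum : ∑ i, α i = 1)
    (hzero : ∑ i, α i • a i = 0) {p q : m → R} {c : ι → R} {b r b' : R} {i₀ : ι}
    (hp : ∀ i, i ≠ i₀ → p ⬝ᵥ a i = c i + b) (hp₀ : p ⬝ᵥ a i₀ = c i₀ + r)
    (hq : ∀ i, q ⬝ᵥ a i = c i + b') :
    α i₀ * r - b' + (1 - α i₀) * b = 0 := by
  have hdiff : ∀ i, (q - p) ⬝ᵥ a i = (b' - b) + if i = i₀ then b - r else 0 := by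
    intro i
    rw [sub_dotProduct, hq]
    split_ifs with hi
    · subst hi; rw [hp₀]; ring
    · rw [hp i hi]; ring
  have hsum := sum_mul_dotProduct_eq_zero hzero (q - p)
  simp only [hdiff, mul_add, Finset.sum_add_distrib, ← Finset.sum_mul, hαsum, mul_ite, mul_zero,
    Finset.sum_ite_eq', Finset.mem_univ, if_true] at hsum
  linear_combination -hsum

theorem min_le_mul_add_one_sub_mul {R : Type*} [Ring R] [LinearOrder R] [IsOrderedRing R]
    {t : R} (ht₀ : 0 ≤ t) (ht₁ : t ≤ 1) (x y : R) :
    min x y ≤ t * y + (1 - t) * x :=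
  calc min x y = t * min x y + (1 - t) * min x y := by noncomm_ring
    _ ≤ t * y + (1 - t) * x :=
      add_le_add (mul_le_mul_of_nonneg_left (min_le_right x y) ht₀)
        (mul_le_mul_of_nonneg_left (min_le_left x y) (sub_nonneg.2 ht₁))

theorem remez_iteration_identity
    (n : ℕ) (a : Fin (n + 1) → (Fin n → ℝ)) (α : Fin (n + 1) → ℝ)
    (hαpos : ∀ i, 0 < α i) (hαsum : ∑ i, α i = 1)
    (hzero : ∑ i, α i • a i = (0 : Fin n → ℝ))
    (pk pk1 : Fin n → ℝ) (c : Fin (n + 1) → ℝ)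
    (bk rk bk1 : ℝ)
    (hk : ∀ i : Fin (n + 1), i ≠ 0 → ∑ j, pk j * a i j = c i + bk)
    (hk0 : ∑ j, pk j * a 0 j = c 0 + rk)
    (hk1 : ∀ i : Fin (n + 1), ∑ j, pk1 j * a i j = c i + bk1) :
    α 0 * rk - bk1 + (1 - α 0) * bk = 0 ∧
      ∀ Bk Bk1 : ℝ, bk ≤ Bk → Bk1 = min Bk rk →
        Bk1 - bk1 ≤ (1 - α 0) * (Bk - bk) := by
  have hident := leveled_deviation_identity hαsum hzero hk hk0 hk1
  refine ⟨hident, fun Bk Bk1 _ hBk1 => ?_⟩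
  have hα₀ : α 0 ≤ 1 :=
    hαsum ▸ Finset.single_le_sum (fun i _ => (hαpos i).le) (Finset.mem_univ 0)
  have hmin := min_le_mul_add_one_sub_mul (hαpos 0).le hα₀ Bk rk
  rw [hBk1]
  linear_combination hmin + hident
end

section
/- Let K be a closed (possibly unbounded) subset of R^N, Phi = {phi_1, ..., phi_n} continuous linearly independent functions on K tending to zero at infinity, f in C(K) tending to zero at infinity, and suppose r = inf_{p in span(Phi)} ||p - f||_{sup, K} > 0. Then there exists a compact subset B_1 of K such that every polynomial p in span(Phi) with ||p - f||_{sup, B_1} <= r satisfies ||p - f||_{sup, K} = ||p - f||_{sup, B_1}; in particular, the best approximation to f on K exists and coincides with the best approximation on B_1. -/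
/-!
Linear independence on `K` is already witnessed on a finite set `F ⊆ K`, and on `F` the
coefficients of `p = ∑ aᵢ φᵢ` are controlled by `sup_F |p|` (norm equivalence in finite dimension).
So if `|p - f| ≤ r` on a set containing `F`, the coefficients of `p` are uniformly bounded and,
since the `φᵢ` and `f` vanish at infinity, `|p - f| ≤ r / 2` off a compact set `C`. As
`sup_K |p - f| ≥ r`, the supremum over `K` is then attained on `B₁ = K ∩ (C ∪ F)`.
-/

open Filter Set Topology NNReal

section

variable {ι X : Type*} [Fintype ι]

lemma exists_finset_linearIndependent_domRestrict {𝕜 : Type*} [DivisionRing 𝕜] {φ : ι → X → 𝕜}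
    {K : Set X} (hφ : LinearIndependent 𝕜 fun i => K.domRestrict (φ i)) :
    ∃ F : Finset X, ↑F ⊆ K ∧ LinearIndependent 𝕜 fun i => (F : Set X).domRestrict (φ i) := by
  classical
  let kerOn : Set X → Submodule 𝕜 (ι → 𝕜) := fun S =>
    LinearMap.ker (Fintype.linearCombination 𝕜 fun i => S.domRestrict (φ i))
  have hkerOn {S : Set X} {a : ι → 𝕜} : a ∈ kerOn S ↔ ∀ x ∈ S, ∑ i, a i * φ i x = 0 := by
    simp [kerOn, funext_iff, Fintype.linearCombination_apply, Finset.sum_apply,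
      Set.domRestrict_apply]
  obtain ⟨_, ⟨F, rfl⟩, hmin⟩ := IsArtinian.set_has_minimal
    (range fun F : {F : Finset X // ↑F ⊆ K} => kerOn F) ⟨_, ⟨∅, by simp⟩, rfl⟩
  refine ⟨F, F.2, linearIndependent_iff_injective_fintypeLinearCombination.mpr ?_⟩
  rw [← LinearMap.ker_eq_bot, eq_bot_iff]
  intro a ha
  rw [← LinearMap.ker_eq_bot.mpr hφ.fintypeLinearCombination_injective]
  refine hkerOn.mpr fun x hx => ?_
  -- by minimality, adding `x` to `F` does not shrink `kerOn F`
  have hle : kerOn (insert x F.1 : Finset X) ≤ kerOn F := fun b hb =>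
    hkerOn.mpr fun y hy => hkerOn.mp hb y (by simp [hy])
  have heq := eq_of_le_of_not_lt hle (hmin _ ⟨⟨_, by simp [insert_subset_iff, hx, F.2]⟩, rfl⟩)
  exact hkerOn.mp (heq ▸ ha : a ∈ kerOn (insert x F.1 : Finset X)) x (by simp)

variable {φ : ι → X → ℝ}

lemma exists_norm_le_mul_norm_domRestrict {F : Finset X}
    (hF : LinearIndependent ℝ fun i => (F : Set X).domRestrict (φ i)) :
    ∃ c : ℝ≥0, ∀ a : ι → ℝ, ‖a‖ ≤ c * ‖(F : Set X).domRestrict (∑ i, a i • φ i)‖ := by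
  let T := Fintype.linearCombination ℝ fun i => (F : Set X).domRestrict (φ i)
  obtain ⟨c, -, hc⟩ := T.exists_antilipschitzWith
    (LinearMap.ker_eq_bot.mpr hF.fintypeLinearCombination_injective)
  have hT (a : ι → ℝ) : T a = (F : Set X).domRestrict (∑ i, a i • φ i) := by
    funext x
    simp [T, Fintype.linearCombination_apply, Finset.sum_apply, Set.domRestrict_apply]
  exact ⟨c, fun a => hT a ▸ ZeroHomClass.bound_of_antilipschitz T hc a⟩

lemma eventually_forall_mem_span_abs_le {l : Filter X} (hφ : ∀ i, Tendsto (φ i) l (𝓝 0))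
    {F : Finset X} (hF : LinearIndependent ℝ fun i => (F : Set X).domRestrict (φ i))
    (M : ℝ) {ε : ℝ} (hε : 0 < ε) :
    ∀ᶠ x in l, ∀ p ∈ Submodule.span ℝ (range φ), (∀ y ∈ F, |p y| ≤ M) → |p x| ≤ ε := by
  obtain ⟨c, hc⟩ := exists_norm_le_mul_norm_domRestrict hF
  have hsmall : Tendsto (fun x => c * max M 0 * ∑ i, |φ i x|) l (𝓝 0) := by
    simpa using (tendsto_finsetSum _ fun i _ => (hφ i).abs).const_mul (c * max M 0)
  filter_upwards [hsmall.eventually (ge_mem_nhds hε)] with x hx p hp hpF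
  obtain ⟨a, rfl⟩ := (Submodule.mem_span_range_iff_exists_fun ℝ).mp hp
  have ha : ‖a‖ ≤ c * max M 0 := by
    refine (hc a).trans (mul_le_mul_of_nonneg_left ?_ ?_)
    · refine (pi_norm_le_iff_of_nonneg (le_max_right M 0)).mpr fun y => ?_
      exact (hpF y y.2).trans (le_max_left M 0)
    · exact c.2
  calc |(∑ i, a i • φ i) x| ≤ ∑ i, ‖a‖ * |φ i x| := by
        simp only [Finset.sum_apply, Pi.smul_apply, smul_eq_mul]
        refine (Finset.abs_sum_le_sum_abs _ _).trans (Finset.sum_le_sum fun i _ => ?_)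
        rw [abs_mul]
        exact mul_le_mul_of_nonneg_right (norm_le_pi_norm a i) (abs_nonneg _)
    _ ≤ c * max M 0 * ∑ i, |φ i x| := by
        rw [← Finset.mul_sum]
        exact mul_le_mul_of_nonneg_right ha (Finset.sum_nonneg fun i _ => abs_nonneg _)
    _ ≤ ε := hx

lemma continuousOn_of_mem_span [TopologicalSpace X] {K : Set X} {S : Set (X → ℝ)}
    (hS : ∀ g ∈ S, ContinuousOn g K) {p : X → ℝ} (hp : p ∈ Submodule.span ℝ S) :
    ContinuousOn p K := by
  induction hp using Submodule.span_induction with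
  | mem g hg => exact hS g hg
  | zero => exact continuousOn_const
  | add g h _ _ hg hh => exact hg.add hh
  | smul c g _ hg => exact hg.const_smul c

end

theorem reduction_to_compact_set
    (N n : ℕ) (K : Set (EuclideanSpace ℝ (Fin N))) (hK : IsClosed K)
    (φ : Fin n → EuclideanSpace ℝ (Fin N) → ℝ)
    (hφcont : ∀ i, ContinuousOn (φ i) K)
    (hφzero : ∀ i, Filter.Tendsto (φ i)
      (Filter.cocompact (EuclideanSpace ℝ (Fin N)) ⊓ Filter.principal K) (nhds 0))
    (hφind : LinearIndependent ℝ fun i => K.restrict (φ i))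
    (f : EuclideanSpace ℝ (Fin N) → ℝ) (hfcont : ContinuousOn f K)
    (hfzero : Filter.Tendsto f
      (Filter.cocompact (EuclideanSpace ℝ (Fin N)) ⊓ Filter.principal K) (nhds 0))
    (r : ℝ) (hrpos : 0 < r)
    (hr : IsGLB {v : ℝ | ∃ p ∈ Submodule.span ℝ (Set.range φ),
        v = ⨆ x : K, |p x - f x|} r) :
    ∃ B₁ : Set (EuclideanSpace ℝ (Fin N)), B₁ ⊆ K ∧ IsCompact B₁ ∧
      ∀ p ∈ Submodule.span ℝ (Set.range φ),
        (⨆ x : B₁, |p x - f x|) ≤ r →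
          (⨆ x : K, |p x - f x|) = ⨆ x : B₁, |p x - f x| := by
  obtain ⟨F, hFK, hFind⟩ := exists_finset_linearIndependent_domRestrict hφind
  have htail : ∀ᶠ x in cocompact _ ⊓ 𝓟 K, (∀ p ∈ Submodule.span ℝ (range φ),
      (∀ y ∈ F, |p y| ≤ r + ∑ y ∈ F, |f y|) → |p x| ≤ r / 4) ∧ |f x| ≤ r / 4 :=
    (eventually_forall_mem_span_abs_le hφzero hFind _ (by positivity)).and
      (hfzero.abs.eventually (ge_mem_nhds (by rw [abs_zero]; positivity)))
  obtain ⟨C, hC, hCtail⟩ := (hasBasis_cocompact.inf_principal K).eventually_iff.mp htail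
  set B₁ := K ∩ (C ∪ F)
  have hB₁ : IsCompact B₁ := (hC.union F.finite_toSet.isCompact).inter_left hK
  refine ⟨B₁, inter_subset_left, hB₁, fun p hp hpB => ?_⟩
  have hbdd : BddAbove (range fun x : B₁ => |p x - f x|) := by
    have := hB₁.bddAbove_image
      (((continuousOn_of_mem_span (by simpa using hφcont) hp).sub hfcont).abs.mono
        inter_subset_left)
    rwa [image_eq_range] at this
  have hin (x) (hx : x ∈ B₁) : |p x - f x| ≤ ⨆ x : B₁, |p x - f x| :=
    le_ciSup hbdd ⟨x, hx⟩
  have hout (x) (hxK : x ∈ K) (hx : x ∉ B₁) : |p x - f x| ≤ r / 2 := by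
    obtain ⟨hp_small, hf_small⟩ := hCtail ⟨fun hxC => hx ⟨hxK, .inl hxC⟩, hxK⟩
    have hpF (y) (hy : y ∈ F) : |p y| ≤ r + ∑ y ∈ F, |f y| := by
      linarith [abs_sub_abs_le_abs_sub (p y) (f y), (hin y ⟨hFK hy, .inr hy⟩).trans hpB,
        Finset.single_le_sum (f := fun y => |f y|) (fun _ _ => abs_nonneg _) hy]
    linarith [abs_sub (p x) (f x), hp_small p hp hpF]
  have hK_le : (⨆ x : K, |p x - f x|) ≤ max (⨆ x : B₁, |p x - f x|) (r / 2) :=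
    Real.iSup_le (fun x => by
      by_cases hx : (x : EuclideanSpace ℝ (Fin N)) ∈ B₁
      · exact le_max_of_le_left (hin x hx)
      · exact le_max_of_le_right (hout x x.2 hx)) (le_max_of_le_right (by positivity))
  have hr_le : r ≤ ⨆ x : K, |p x - f x| := hr.1 ⟨p, hp, rfl⟩
  exact le_antisymm ((le_max_iff.mp hK_le).resolve_right (by linarith)) (hpB.trans hr_le)
end

section
/- Let K = [0, 1], lambda(t) = 4 + 32 t for 0 <= t <= 1/2 and lambda(t) = 4 + 32(1 - t) for 1/2 < t <= 1, and f(t) = cos(4 pi lambda(t) t) + 2 sin(4 pi t). Then the best uniform approximation of f on [0,1] from the span of {1, cos(4 pi t), sin(4 pi t)} is p(t) = 2 sin(4 pi t); that is, ||f - p||_{C[0,1]} <= ||f - q||_{C[0,1]} for all q in the span. -/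
/-!
On `[0, 1/2]` the error `f - p = cos (4πλ(t)t)` equals `cos (π (16t + 128t²))`, so it is `1` at
`t = 0, 1/4` (phases `0, 12`) and `-1` at `t = (√3 - 1)/16, (3√3 - 1)/16` (phases `1, 13`).
If some `q` in the span did better than `‖f - p‖ = 1`, then `r = q - p`, a trigonometric polynomial
`a + b cos θ + c sin θ` in `θ = 4πt`, would have the sign of `f - p` at these four points, i.e. be
positive at `θ = 0, π` and negative at one point of `(0, π)` and one of `(π, 2π)`.
A positive combination of these four sign conditions cancels `a`, `b` and `c`, which is absurd.
-/

open Real Set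

-- The weights below make the signed evaluations at `0, π, α, β` sum to zero identically in `a, b, c`.
lemma false_of_trig_sign_alternation {a b c α β : ℝ} (hα : 0 < sin α) (hβ : sin β < 0)
    (h₀ : 0 < a + b) (hπ : 0 < a - b)
    (hrα : a + b * cos α + c * sin α < 0) (hrβ : a + b * cos β + c * sin β < 0) : False := by
  have hw₀ : 0 ≤ sin α * (1 + cos β) - sin β * (1 + cos α) := by
    nlinarith [neg_one_le_cos α, neg_one_le_cos β]
  have hwπ : 0 ≤ sin α * (1 - cos β) - sin β * (1 - cos α) := by
    nlinarith [cos_le_one α, cos_le_one β]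
  have hcert : (sin α * (1 + cos β) - sin β * (1 + cos α)) * (a + b)
      + (sin α * (1 - cos β) - sin β * (1 - cos α)) * (a - b)
      = 2 * (sin α * (a + b * cos β + c * sin β) - sin β * (a + b * cos α + c * sin α)) := by
    ring
  linarith [mul_nonneg hw₀ h₀.le, mul_nonneg hwπ hπ.le, mul_neg_of_pos_of_neg hα hrβ,
    mul_pos_of_neg_of_neg hβ hrα]

lemma mul_pos_of_abs_eq_one_of_abs_sub_lt_one {e r : ℝ} (he : |e| = 1) (h : |e - r| < 1) :
    0 < e * r := by
  rcases (abs_eq zero_le_one).mp he with rfl | rfl <;>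
  · have := abs_lt.mp h
    nlinarith

lemma cos_pi_mul_of_eq_natCast {x : ℝ} (n : ℕ) (hx : x = n) : cos (π * x) = (-1) ^ n := by
  rw [hx, mul_comm, cos_nat_mul_pi]

lemma abs_add_mul_cos_add_mul_sin_le (a b c θ : ℝ) :
    |a + b * cos θ + c * sin θ| ≤ |a| + |b| + |c| := by
  calc |a + b * cos θ + c * sin θ| ≤ |a| + |b| * |cos θ| + |c| * |sin θ| := by
        grw [abs_add_le, abs_add_le, abs_mul, abs_mul]
    _ ≤ |a| + |b| + |c| := by
        gcongr <;> apply mul_le_of_le_one_right (abs_nonneg _) <;>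
          simp [abs_cos_le_one, abs_sin_le_one]

-- On `[0, 1/2]`, `4πλ(t)t = π · chirpPhase t`.
def chirpPhase (t : ℝ) : ℝ := 16 * t + 128 * t ^ 2

lemma chirpPhase_sqrt_three_sub_one_div : chirpPhase ((√3 - 1) / 16) = (1 : ℕ) := by
  unfold chirpPhase
  nlinarith [sq_sqrt (show (0 : ℝ) ≤ 3 by norm_num)]

lemma chirpPhase_three_mul_sqrt_three_sub_one_div :
    chirpPhase ((3 * √3 - 1) / 16) = (13 : ℕ) := by
  unfold chirpPhase
  nlinarith [sq_sqrt (show (0 : ℝ) ≤ 3 by norm_num)]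

lemma false_of_sign_eq_chirp {a b c : ℝ}
    (h : ∀ t ∈ Icc (0 : ℝ) (1 / 2), ∀ n : ℕ, chirpPhase t = n →
      0 < (-1) ^ n * (a + b * cos (4 * π * t) + c * sin (4 * π * t))) : False := by
  have hsqrt₁ : 5 / 3 < √3 := by rw [lt_sqrt (by norm_num)]; norm_num
  have hsqrt₂ : √3 < 2 := by rw [sqrt_lt' (by norm_num)]; norm_num
  have h₀ := h 0 (by norm_num) 0 (by norm_num [chirpPhase])
  have hπ := h (1 / 4) (by norm_num) 12 (by norm_num [chirpPhase])
  have hα := h ((√3 - 1) / 16) ⟨by linarith, by linarith⟩ 1 chirpPhase_sqrt_three_sub_one_div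
  have hβ := h ((3 * √3 - 1) / 16) ⟨by linarith, by linarith⟩ 13
    chirpPhase_three_mul_sqrt_three_sub_one_div
  rw [show 4 * π * (1 / 4) = π by ring, cos_pi, sin_pi] at hπ
  norm_num at h₀ hπ hα hβ
  refine false_of_trig_sign_alternation (c := c)
    (α := 4 * π * ((√3 - 1) / 16)) (β := 4 * π * ((3 * √3 - 1) / 16))
    (sin_pos_of_pos_of_lt_pi ?_ ?_) (neg_pos.mp (sin_sub_pi _ ▸ sin_pos_of_pos_of_lt_pi ?_ ?_))
    h₀ (by linarith) (by linarith) (by linarith)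
  all_goals nlinarith [pi_pos]

theorem nonstationary_signal_best_approx
    (lam : ℝ → ℝ)
    (hlam : ∀ t : ℝ, lam t = if t ≤ 1 / 2 then 4 + 32 * t else 4 + 32 * (1 - t))
    (f : ℝ → ℝ)
    (hf : ∀ t : ℝ, f t = Real.cos (4 * π * lam t * t) + 2 * Real.sin (4 * π * t))
    (g : Fin 3 → ℝ → ℝ)
    (hg : g = ![fun _ => (1 : ℝ), fun t => Real.cos (4 * π * t), fun t => Real.sin (4 * π * t)])
    (p : ℝ → ℝ) (hp : ∀ t, p t = 2 * Real.sin (4 * π * t)) :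
    ∀ q ∈ Submodule.span ℝ (Set.range g),
      (⨆ t : Set.Icc (0 : ℝ) 1, |f t - p t|) ≤ ⨆ t : Set.Icc (0 : ℝ) 1, |f t - q t| := by
  intro q hq
  obtain ⟨w, rfl⟩ := (Submodule.mem_span_range_iff_exists_fun ℝ).mp hq
  have he : ∀ t, f t - p t = cos (4 * π * lam t * t) := fun t => by
    rw [hf, hp, add_sub_cancel_right]
  have hr : ∀ t, (∑ i, w i • g i) t - p t
      = w 0 + w 1 * cos (4 * π * t) + (w 2 - 2) * sin (4 * π * t) := fun t => by
    simp only [hg, Finset.sum_apply, Pi.smul_apply, smul_eq_mul, Fin.sum_univ_three,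
      Matrix.cons_val_zero, Matrix.cons_val_one, Matrix.cons_val, hp]
    ring
  refine (ciSup_le fun t => by rw [he]; exact abs_cos_le_one _).trans (le_of_not_gt fun hlt => ?_)
  have hbdd : BddAbove (range fun t : Icc (0 : ℝ) 1 => |f t - (∑ i, w i • g i) t|) := by
    refine ⟨1 + (|w 0| + |w 1| + |w 2 - 2|), forall_mem_range.mpr fun t => ?_⟩
    rw [← sub_sub_sub_cancel_right _ _ (p t), he, hr]
    exact (abs_sub _ _).trans (add_le_add (abs_cos_le_one _) (abs_add_mul_cos_add_mul_sin_le ..))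
  refine false_of_sign_eq_chirp (a := w 0) (b := w 1) (c := w 2 - 2) fun t ht n hn => ?_
  have he_t : f t - p t = (-1) ^ n := by
    rw [he, hlam, if_pos ht.2, ← cos_pi_mul_of_eq_natCast n hn, chirpPhase]
    ring_nf
  rw [← he_t, ← hr]
  refine mul_pos_of_abs_eq_one_of_abs_sub_lt_one (by simp [he_t]) ?_
  rw [sub_sub_sub_cancel_right]
  exact (le_ciSup hbdd ⟨t, ht.1, ht.2.trans (by norm_num)⟩).trans_lt hlt
end
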